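/- For every real p with 0 ≤ p < 1 and every integer s ≥ 3, the strict inequality t_{K_s}(p) < (s−1)·t_{K_2}(p) holds, where t_{K_s}(p) = −(1/s)·log(2((1+p)/2)^s − p^s). -/

import Mathlib

open Filter

/-- `t_{K_s}(p) = -(1/s) log (2((1+p)/2)^s - p^s)`. -/
noncomputable def cliqueThreshold (p : ℝ) (s : ℕ) : ℝ :=
  -(1 / s) * Real.log (2 * ((1 + p) / 2) ^ s - p ^ s)

private lemma myA_pos (p : ℝ) (hp0 : 0 ≤ p) (hp1 : p < 1) (n : ℕ) :
    0 < 2 * ((1 + p) / 2) ^ n - p ^ n := by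
  have hpq : p ≤ (1 + p) / 2 := by linarith
  have h1 : p ^ n ≤ ((1 + p) / 2) ^ n := pow_le_pow_left₀ hp0 hpq n
  have h2 : 0 < ((1 + p) / 2) ^ n := by positivity
  linarith

private lemma myL (p : ℝ) (hp0 : 0 ≤ p) (hp1 : p < 1) (n : ℕ) :
    (2 * ((1 + p) / 2) ^ (n + 2) - p ^ (n + 2)) ^ 2 * (2 * ((1 + p) / 2) ^ 2 - p ^ 2)
      < (2 * ((1 + p) / 2) ^ (n + 3) - p ^ (n + 3)) *
        (2 * ((1 + p) / 2) ^ (n + 1) - p ^ (n + 1)) := by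
  obtain ⟨q, hq⟩ : ∃ q : ℝ, q = (1 + p) / 2 := ⟨_, rfl⟩
  rw [← hq]
  have hq0 : 0 < q := by rw [hq]; linarith
  have hpq : p < q := by rw [hq]; linarith
  have hAq : q ^ (n + 1) ≤ 2 * q ^ (n + 2) - p ^ (n + 2) := by
    have h1 : p ^ (n + 1) ≤ q ^ (n + 1) := pow_le_pow_left₀ hp0 hpq.le _
    have h2 : p * p ^ (n + 1) ≤ p * q ^ (n + 1) := mul_le_mul_of_nonneg_left h1 hp0
    have h3 : 2 * q ^ (n + 2) - p ^ (n + 2) - q ^ (n + 1)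
        = p * q ^ (n + 1) - p * p ^ (n + 1) := by rw [hq]; ring
    linarith
  have hkey : (q * p) ^ (n + 1) < (2 * q ^ (n + 2) - p ^ (n + 2)) ^ 2 := by
    have h1 : p ^ (n + 1) < q ^ (n + 1) := pow_lt_pow_left₀ hpq hp0 (by omega)
    have h2 : 0 < q ^ (n + 1) := pow_pos hq0 _
    have h3 : (q * p) ^ (n + 1) = q ^ (n + 1) * p ^ (n + 1) := mul_pow q p (n + 1)
    nlinarith [hAq, h2]
  have hid : (2 * q ^ (n + 3) - p ^ (n + 3)) * (2 * q ^ (n + 1) - p ^ (n + 1))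
      = (2 * q ^ (n + 2) - p ^ (n + 2)) ^ 2 - 2 * (q * p) ^ (n + 1) * (q - p) ^ 2 := by
    ring
  have h2 : (q - p) ^ 2 = (1 - p) ^ 2 / 4 := by rw [hq]; ring
  have h3 : 2 * q ^ 2 - p ^ 2 = 1 - (1 - p) ^ 2 / 2 := by rw [hq]; ring
  have hp2 : 0 < (1 - p) ^ 2 := by nlinarith
  have hprod := mul_pos hp2 (sub_pos.mpr hkey)
  rw [hid, h2, h3]
  nlinarith [hprod]

private lemma myStep (p : ℝ) (hp0 : 0 ≤ p) (hp1 : p < 1) (n : ℕ) :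
    (2 * ((1 + p) / 2) ^ 2 - p ^ 2) ^ (n + 2) * (2 * ((1 + p) / 2) ^ (n + 2) - p ^ (n + 2))
      < 2 * ((1 + p) / 2) ^ (n + 3) - p ^ (n + 3) := by
  induction n with
  | zero =>
      have h := myL p hp0 hp1 0
      have h1 : 2 * ((1 + p) / 2) ^ (0 + 1) - p ^ (0 + 1) = 1 := by ring
      rw [h1, mul_one] at h
      calc (2 * ((1 + p) / 2) ^ 2 - p ^ 2) ^ (0 + 2) * (2 * ((1 + p) / 2) ^ (0 + 2) - p ^ (0 + 2))
          = (2 * ((1 + p) / 2) ^ (0 + 2) - p ^ (0 + 2)) ^ 2 * (2 * ((1 + p) / 2) ^ 2 - p ^ 2) := by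
            ring
        _ < _ := h
  | succ n ih =>
      rw [show n + 1 + 2 = n + 3 by omega, show n + 1 + 3 = n + 4 by omega]
      have hL := myL p hp0 hp1 (n + 1)
      rw [show n + 1 + 2 = n + 3 by omega, show n + 1 + 3 = n + 4 by omega,
          show n + 1 + 1 = n + 2 by omega] at hL
      have hA2 : 0 < 2 * ((1 + p) / 2) ^ 2 - p ^ 2 := myA_pos p hp0 hp1 2
      have hA3 : 0 < 2 * ((1 + p) / 2) ^ (n + 2) - p ^ (n + 2) := myA_pos p hp0 hp1 _
      have hA4 : 0 < 2 * ((1 + p) / 2) ^ (n + 3) - p ^ (n + 3) := myA_pos p hp0 hp1 _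
      have step1 :
          (2 * ((1 + p) / 2) ^ 2 - p ^ 2) ^ (n + 3) * (2 * ((1 + p) / 2) ^ (n + 3) - p ^ (n + 3))
              * (2 * ((1 + p) / 2) ^ (n + 2) - p ^ (n + 2))
            < (2 * ((1 + p) / 2) ^ (n + 4) - p ^ (n + 4)) *
              (2 * ((1 + p) / 2) ^ (n + 2) - p ^ (n + 2)) := by
        calc (2 * ((1 + p) / 2) ^ 2 - p ^ 2) ^ (n + 3)
                * (2 * ((1 + p) / 2) ^ (n + 3) - p ^ (n + 3))
                * (2 * ((1 + p) / 2) ^ (n + 2) - p ^ (n + 2))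
            = ((2 * ((1 + p) / 2) ^ 2 - p ^ 2) * (2 * ((1 + p) / 2) ^ (n + 3) - p ^ (n + 3)))
              * ((2 * ((1 + p) / 2) ^ 2 - p ^ 2) ^ (n + 2)
                 * (2 * ((1 + p) / 2) ^ (n + 2) - p ^ (n + 2))) := by ring
          _ < ((2 * ((1 + p) / 2) ^ 2 - p ^ 2) * (2 * ((1 + p) / 2) ^ (n + 3) - p ^ (n + 3)))
              * (2 * ((1 + p) / 2) ^ (n + 3) - p ^ (n + 3)) :=
                mul_lt_mul_of_pos_left ih (mul_pos hA2 hA4)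
          _ = (2 * ((1 + p) / 2) ^ (n + 3) - p ^ (n + 3)) ^ 2
              * (2 * ((1 + p) / 2) ^ 2 - p ^ 2) := by ring
          _ < (2 * ((1 + p) / 2) ^ (n + 4) - p ^ (n + 4)) *
              (2 * ((1 + p) / 2) ^ (n + 2) - p ^ (n + 2)) := hL
      exact lt_of_mul_lt_mul_right step1 hA3.le

private lemma myR (p : ℝ) (hp0 : 0 ≤ p) (hp1 : p < 1) (s : ℕ) (hs : 3 ≤ s) :
    (2 * ((1 + p) / 2) ^ 2 - p ^ 2) ^ (s * (s - 1)) < (2 * ((1 + p) / 2) ^ s - p ^ s) ^ 2 := by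
  induction s, hs using Nat.le_induction with
  | base =>
      have h := myStep p hp0 hp1 0
      have hA2 : 0 < 2 * ((1 + p) / 2) ^ 2 - p ^ 2 := myA_pos p hp0 hp1 2
      have h3 : (2 * ((1 + p) / 2) ^ 2 - p ^ 2) ^ 3 < 2 * ((1 + p) / 2) ^ 3 - p ^ 3 := by
        calc (2 * ((1 + p) / 2) ^ 2 - p ^ 2) ^ 3
            = (2 * ((1 + p) / 2) ^ 2 - p ^ 2) ^ (0 + 2)
              * (2 * ((1 + p) / 2) ^ (0 + 2) - p ^ (0 + 2)) := by ring
          _ < _ := h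
      have hpos : 0 < (2 * ((1 + p) / 2) ^ 2 - p ^ 2) ^ 3 := pow_pos hA2 3
      show (2 * ((1 + p) / 2) ^ 2 - p ^ 2) ^ 6 < (2 * ((1 + p) / 2) ^ 3 - p ^ 3) ^ 2
      nlinarith [h3, hpos]
  | succ s hs ih =>
      obtain ⟨m, rfl⟩ : ∃ m, s = m + 3 := ⟨s - 3, by omega⟩
      have hstep := myStep p hp0 hp1 (m + 1)
      have hA2 : 0 < 2 * ((1 + p) / 2) ^ 2 - p ^ 2 := myA_pos p hp0 hp1 2
      have hAs : 0 < 2 * ((1 + p) / 2) ^ (m + 3) - p ^ (m + 3) := myA_pos p hp0 hp1 _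
      have hpowpos : 0 < ((2 * ((1 + p) / 2) ^ 2 - p ^ 2) ^ (m + 3)) ^ 2 := by positivity
      have hstep_nonneg : 0 ≤ (2 * ((1 + p) / 2) ^ 2 - p ^ 2) ^ (m + 3)
          * (2 * ((1 + p) / 2) ^ (m + 3) - p ^ (m + 3)) := by positivity
      have hsq : ((2 * ((1 + p) / 2) ^ 2 - p ^ 2) ^ (m + 3)
            * (2 * ((1 + p) / 2) ^ (m + 3) - p ^ (m + 3))) ^ 2
          < (2 * ((1 + p) / 2) ^ (m + 4) - p ^ (m + 4)) ^ 2 := by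
        nlinarith [hstep, hstep_nonneg]
      show (2 * ((1 + p) / 2) ^ 2 - p ^ 2) ^ ((m + 4) * (m + 3))
          < (2 * ((1 + p) / 2) ^ (m + 4) - p ^ (m + 4)) ^ 2
      calc (2 * ((1 + p) / 2) ^ 2 - p ^ 2) ^ ((m + 4) * (m + 3))
          = ((2 * ((1 + p) / 2) ^ 2 - p ^ 2) ^ (m + 3)) ^ 2
            * (2 * ((1 + p) / 2) ^ 2 - p ^ 2) ^ ((m + 3) * (m + 2)) := by
              rw [← pow_mul, ← pow_add]
              congr 1
              ring
        _ < ((2 * ((1 + p) / 2) ^ 2 - p ^ 2) ^ (m + 3)) ^ 2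
            * (2 * ((1 + p) / 2) ^ (m + 3) - p ^ (m + 3)) ^ 2 :=
              mul_lt_mul_of_pos_left ih hpowpos
        _ = ((2 * ((1 + p) / 2) ^ 2 - p ^ 2) ^ (m + 3)
            * (2 * ((1 + p) / 2) ^ (m + 3) - p ^ (m + 3))) ^ 2 := by ring
        _ < _ := hsq

/-- For `0 ≤ p < 1` and integers `s ≥ 3`, `t_{K_s}(p) < (s-1) t_{K_2}(p)`. -/
theorem cliqueThreshold_lt (p : ℝ) (hp0 : 0 ≤ p) (hp1 : p < 1) (s : ℕ) (hs : 3 ≤ s) :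
    cliqueThreshold p s < ((s : ℝ) - 1) * cliqueThreshold p 2 := by
  have hA2 : 0 < 2 * ((1 + p) / 2) ^ 2 - p ^ 2 := myA_pos p hp0 hp1 2
  have hAs : 0 < 2 * ((1 + p) / 2) ^ s - p ^ s := myA_pos p hp0 hp1 s
  have hR := myR p hp0 hp1 s hs
  have hlog := Real.log_lt_log (pow_pos hA2 _) hR
  rw [Real.log_pow, Real.log_pow] at hlog
  have h1 : (1 : ℕ) ≤ s := by omega
  push_cast [Nat.cast_sub h1] at hlog
  -- hlog : ↑s * (↑s - 1) * log A2 < 2 * log As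
  have hS : (0 : ℝ) < (s : ℝ) := Nat.cast_pos.mpr (by omega)
  have hSne : (s : ℝ) ≠ 0 := ne_of_gt hS
  unfold cliqueThreshold
  have e1 : -(1 / (s : ℝ)) * Real.log (2 * ((1 + p) / 2) ^ s - p ^ s)
      = -(2 * Real.log (2 * ((1 + p) / 2) ^ s - p ^ s)) / (2 * (s : ℝ)) := by
    field_simp
  have e2 : ((s : ℝ) - 1) * (-(1 / ((2 : ℕ) : ℝ)) * Real.log (2 * ((1 + p) / 2) ^ 2 - p ^ 2))
      = -((s : ℝ) * ((s : ℝ) - 1) * Real.log (2 * ((1 + p) / 2) ^ 2 - p ^ 2)) / (2 * (s : ℝ)) := by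
    field_simp
    ring
  rw [e1, e2, div_lt_div_iff₀ (by positivity) (by positivity)]
  nlinarith [hlog, hS]
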